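/- Let (M, E) be an exact category and 𝒫 a full additive subcategory of M satisfying condition (▲). Then for any conflation 0 → X →f Y →g Z → 0 in M which is Hom(−,𝒫)-exact, the morphism ḡ : Y → Z is the cokernel of f̄ : X → Y in the quotient category M/𝒫. -/

import Mathlib

open CategoryTheory CategoryTheory.Limits

universe v u

namespace PaperQEC

section QuotientCategory

variable {C : Type u} [Category.{v} C] [Preadditive C]

/-- `f` factors through an object belonging to `P`. -/
def FactorsThru (P : Set C) {X Y : C} (f : X ⟶ Y) : Prop :=
  ∃ Z ∈ P, ∃ (g : X ⟶ Z) (h : Z ⟶ Y), g ≫ h = f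

/-- The subgroup of `Hom(X, Y)` generated by morphisms factoring through an object of `P`
(for `P` closed under finite sums this is just the set of such morphisms). -/
def factorIdeal (P : Set C) (X Y : C) : AddSubgroup (X ⟶ Y) :=
  AddSubgroup.closure {f | FactorsThru P f}

lemma factorIdeal_comp_left (P : Set C) {X Y Z : C} {f : X ⟶ Y}
    (hf : f ∈ factorIdeal P X Y) (g : Y ⟶ Z) : f ≫ g ∈ factorIdeal P X Z := by
  have h : factorIdeal P X Y ≤
      (factorIdeal P X Z).comap (AddMonoidHom.mk' (fun u : X ⟶ Y => u ≫ g)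
        (fun a b => Preadditive.add_comp _ _ _ _ _ _)) := by
    refine (AddSubgroup.closure_le _).mpr ?_
    rintro u ⟨Zp, hZp, a, b, rfl⟩
    exact AddSubgroup.mem_comap.mpr
      (AddSubgroup.subset_closure ⟨Zp, hZp, a, b ≫ g, (Category.assoc _ _ _).symm⟩)
  exact h hf

lemma factorIdeal_comp_right (P : Set C) {X Y Z : C} (f : X ⟶ Y) {g : Y ⟶ Z}
    (hg : g ∈ factorIdeal P Y Z) : f ≫ g ∈ factorIdeal P X Z := by
  have h : factorIdeal P Y Z ≤
      (factorIdeal P X Z).comap (AddMonoidHom.mk' (fun u : Y ⟶ Z => f ≫ u)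
        (fun a b => Preadditive.comp_add _ _ _ _ _ _)) := by
    refine (AddSubgroup.closure_le _).mpr ?_
    rintro u ⟨Zp, hZp, a, b, rfl⟩
    exact AddSubgroup.mem_comap.mpr
      (AddSubgroup.subset_closure ⟨Zp, hZp, f ≫ a, b, Category.assoc _ _ _⟩)
  exact h hg

/-- Objects of the quotient (stable) category `C / P`. -/
structure QuotObj (P : Set C) : Type u where
  obj : C

variable (P : Set C)

instance quotCategory : Category.{v} (QuotObj P) where
  Hom A B := (A.obj ⟶ B.obj) ⧸ factorIdeal P A.obj B.obj
  id A := QuotientAddGroup.mk (𝟙 A.obj)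
  comp {A B D} f g :=
    Quotient.liftOn₂ f g (fun a b => QuotientAddGroup.mk (a ≫ b)) (by
      intro a₁ b₁ a₂ b₂ ha hb
      have ha' : -a₁ + a₂ ∈ factorIdeal P A.obj B.obj := QuotientAddGroup.leftRel_apply.mp ha
      have hb' : -b₁ + b₂ ∈ factorIdeal P B.obj D.obj := QuotientAddGroup.leftRel_apply.mp hb
      refine (QuotientAddGroup.eq (s := factorIdeal P A.obj D.obj)).mpr ?_
      have h1 : (-a₁ + a₂) ≫ b₁ ∈ factorIdeal P A.obj D.obj :=
        factorIdeal_comp_left P ha' b₁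
      have h2 : a₂ ≫ (-b₁ + b₂) ∈ factorIdeal P A.obj D.obj :=
        factorIdeal_comp_right P a₂ hb'
      have h3 := AddSubgroup.add_mem _ h1 h2
      have heq : -(a₁ ≫ b₁) + a₂ ≫ b₂ = (-a₁ + a₂) ≫ b₁ + a₂ ≫ (-b₁ + b₂) := by
        simp only [Preadditive.add_comp, Preadditive.comp_add, Preadditive.neg_comp,
          Preadditive.comp_neg]
        abel
      rw [heq]; exact h3)
  id_comp {A B} f := by
    induction f using Quotient.inductionOn with
    | h a => exact congrArg QuotientAddGroup.mk (Category.id_comp a)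
  comp_id {A B} f := by
    induction f using Quotient.inductionOn with
    | h a => exact congrArg QuotientAddGroup.mk (Category.comp_id a)
  assoc {A B D E} f g h := by
    induction f using Quotient.inductionOn with
    | h a =>
    induction g using Quotient.inductionOn with
    | h b =>
    induction h using Quotient.inductionOn with
    | h c => exact congrArg QuotientAddGroup.mk (Category.assoc a b c)

/-- The image in the quotient category of a morphism of `C`. -/
def qmap {X Y : C} (f : X ⟶ Y) : (QuotObj.mk X : QuotObj P) ⟶ QuotObj.mk Y :=
  QuotientAddGroup.mk f

instance quotPreadditive : Preadditive (QuotObj P) where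
  homGroup A B :=
    inferInstanceAs (AddCommGroup ((A.obj ⟶ B.obj) ⧸ factorIdeal P A.obj B.obj))
  add_comp A B D f f' g := by
    induction f using Quotient.inductionOn with
    | h a =>
    induction f' using Quotient.inductionOn with
    | h a' =>
    induction g using Quotient.inductionOn with
    | h b =>
      show QuotientAddGroup.mk ((a + a') ≫ b) =
        QuotientAddGroup.mk (a ≫ b) + QuotientAddGroup.mk (a' ≫ b)
      rw [Preadditive.add_comp]
      rfl
  comp_add A B D f g g' := by
    induction f using Quotient.inductionOn with
    | h a =>
    induction g using Quotient.inductionOn with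
    | h b =>
    induction g' using Quotient.inductionOn with
    | h b' =>
      show QuotientAddGroup.mk (a ≫ (b + b')) =
        QuotientAddGroup.mk (a ≫ b) + QuotientAddGroup.mk (a ≫ b')
      rw [Preadditive.comp_add]
      rfl

end QuotientCategory

section Exact

variable {C : Type u} [Category.{v} C] [Preadditive C]

/-- `k` is a kernel of `f`. -/
def IsKernelOf {K X Y : C} (k : K ⟶ X) (f : X ⟶ Y) : Prop :=
  k ≫ f = 0 ∧ ∀ {T : C} (g : T ⟶ X), g ≫ f = 0 → ∃! t : T ⟶ K, t ≫ k = g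

/-- `c` is a cokernel of `f`. -/
def IsCokernelOf {X Y Q : C} (c : Y ⟶ Q) (f : X ⟶ Y) : Prop :=
  f ≫ c = 0 ∧ ∀ {T : C} (g : Y ⟶ T), f ≫ g = 0 → ∃! t : Q ⟶ T, c ≫ t = g

/-- A class of composable pairs of morphisms (the prospective conflations). -/
abbrev ConfClass (D : Type*) [Category D] :=
  ∀ ⦃X Y Z : D⦄, (X ⟶ Y) → (Y ⟶ Z) → Prop

/-- A Quillen exact structure on an additive category: a class of kernel–cokernel pairs
(conflations), closed under isomorphisms, containing the identities as inflations and
deflations, with inflations and deflations closed under composition, pushouts of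
inflations and pullbacks of deflations existing and being inflations resp. deflations. -/
structure ExactStructure (D : Type u) [Category.{v} D] [Preadditive D] where
  conf : ConfClass D
  ker_of_conf : ∀ {X Y Z : D} {i : X ⟶ Y} {d : Y ⟶ Z}, conf i d → IsKernelOf i d
  coker_of_conf : ∀ {X Y Z : D} {i : X ⟶ Y} {d : Y ⟶ Z}, conf i d → IsCokernelOf d i
  isoClosed : ∀ {X Y Z X' Y' Z' : D} {i : X ⟶ Y} {d : Y ⟶ Z} {i' : X' ⟶ Y'} {d' : Y' ⟶ Z'}
    (eX : X ≅ X') (eY : Y ≅ Y') (eZ : Z ≅ Z'),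
    i ≫ eY.hom = eX.hom ≫ i' → d ≫ eZ.hom = eY.hom ≫ d' → conf i d → conf i' d'
  id_isInflation : ∀ X : D, ∃ (Z : D) (d : X ⟶ Z), conf (𝟙 X) d
  id_isDeflation : ∀ X : D, ∃ (W : D) (i : W ⟶ X), conf i (𝟙 X)
  infl_comp : ∀ {X Y Z : D} (i : X ⟶ Y) (j : Y ⟶ Z),
    (∃ (W : D) (d : Y ⟶ W), conf i d) → (∃ (W : D) (d : Z ⟶ W), conf j d) →
    ∃ (W : D) (d : Z ⟶ W), conf (i ≫ j) d
  defl_comp : ∀ {X Y Z : D} (p : X ⟶ Y) (q : Y ⟶ Z),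
    (∃ (W : D) (i : W ⟶ X), conf i p) → (∃ (W : D) (i : W ⟶ Y), conf i q) →
    ∃ (W : D) (i : W ⟶ X), conf i (p ≫ q)
  infl_pushout : ∀ {X Y : D} (i : X ⟶ Y), (∃ (W : D) (d : Y ⟶ W), conf i d) →
    ∀ {A : D} (f : X ⟶ A), ∃ (B : D) (i' : A ⟶ B) (g : Y ⟶ B),
      (∃ (W : D) (d : B ⟶ W), conf i' d) ∧ IsPushout i f g i'
  defl_pullback : ∀ {Y Z : D} (p : Y ⟶ Z), (∃ (W : D) (i : W ⟶ Y), conf i p) →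
    ∀ {B : D} (f : B ⟶ Z), ∃ (A : D) (p' : A ⟶ B) (g : A ⟶ Y),
      (∃ (W : D) (i : W ⟶ A), conf i p') ∧ IsPullback g p' p f

/-- `i` is an inflation, i.e. the first map of some conflation. -/
def IsInflation (E : ConfClass C) {X Y : C} (i : X ⟶ Y) : Prop :=
  ∃ (Z : C) (d : Y ⟶ Z), E i d

/-- `d` is a deflation, i.e. the second map of some conflation. -/
def IsDeflation (E : ConfClass C) {Y Z : C} (d : Y ⟶ Z) : Prop :=
  ∃ (X : C) (i : X ⟶ Y), E i d

/-- `P` is a full additive subcategory: nonempty, closed under isomorphisms,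
finite sums and summands. -/
structure IsAddSubcat [HasBinaryBiproducts C] (P : Set C) : Prop where
  nonempty : P.Nonempty
  isoClosed : ∀ {X Y : C}, (X ≅ Y) → X ∈ P → Y ∈ P
  sumClosed : ∀ {X Y : C}, X ∈ P → Y ∈ P → (X ⊞ Y) ∈ P
  summandClosed : ∀ {X Y : C} (s : X ⟶ Y) (r : Y ⟶ X), s ≫ r = 𝟙 X → Y ∈ P → X ∈ P

/-- `f : Q ⟶ X` is a `P`-precover of `X`. -/
def IsPrecover (P : Set C) {Q X : C} (f : Q ⟶ X) : Prop :=
  Q ∈ P ∧ ∀ (Q' : C), Q' ∈ P → ∀ g : Q' ⟶ X, ∃ h : Q' ⟶ Q, h ≫ f = g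

/-- `f : X ⟶ Q` is a `P`-preenvelope of `X`. -/
def IsPreenvelope (P : Set C) {X Q : C} (f : X ⟶ Q) : Prop :=
  Q ∈ P ∧ ∀ (Q' : C), Q' ∈ P → ∀ g : X ⟶ Q', ∃ h : Q ⟶ Q', f ≫ h = g

/-- `P` is strongly contravariantly finite: every object has a `P`-precover
which is a deflation. -/
def StronglyContraFinite (E : ConfClass C) (P : Set C) : Prop :=
  ∀ X : C, ∃ (Q : C) (f : Q ⟶ X), IsPrecover P f ∧ IsDeflation E f

/-- `P` is strongly covariantly finite: every object has a `P`-preenvelope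
which is an inflation. -/
def StronglyCovFinite (E : ConfClass C) (P : Set C) : Prop :=
  ∀ X : C, ∃ (Q : C) (f : X ⟶ Q), IsPreenvelope P f ∧ IsInflation E f

/-- The pair `(i, d)` is `Hom(P,-)`-exact: for every `Q ∈ P`, the sequence
`0 → Hom(Q,X) → Hom(Q,Y) → Hom(Q,Z) → 0` is exact. -/
def HomCovExact (P : Set C) {X Y Z : C} (i : X ⟶ Y) (d : Y ⟶ Z) : Prop :=
  ∀ Q : C, Q ∈ P →
    (∀ g : Q ⟶ X, g ≫ i = 0 → g = 0) ∧
    (∀ u : Q ⟶ Y, u ≫ d = 0 → ∃ g : Q ⟶ X, g ≫ i = u) ∧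
    (∀ h : Q ⟶ Z, ∃ u : Q ⟶ Y, u ≫ d = h)

/-- The pair `(i, d)` is `Hom(-,P)`-exact: for every `Q ∈ P`, the sequence
`0 → Hom(Z,Q) → Hom(Y,Q) → Hom(X,Q) → 0` is exact. -/
def HomContraExact (P : Set C) {X Y Z : C} (i : X ⟶ Y) (d : Y ⟶ Z) : Prop :=
  ∀ Q : C, Q ∈ P →
    (∀ g : Z ⟶ Q, d ≫ g = 0 → g = 0) ∧
    (∀ u : Y ⟶ Q, i ≫ u = 0 → ∃ g : Z ⟶ Q, d ≫ g = u) ∧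
    (∀ h : X ⟶ Q, ∃ u : Y ⟶ Q, i ≫ u = h)

/-- Condition (▲): `P` is strongly covariantly finite and every `X` admits a conflation
`0 → X → Q₀ → Q₁ → 0` with `Q₀, Q₁ ∈ P` whose inflation is a `P`-preenvelope. -/
def CondEnv (E : ConfClass C) (P : Set C) : Prop :=
  StronglyCovFinite E P ∧
  ∀ X : C, ∃ (Q₀ Q₁ : C) (α : X ⟶ Q₀) (q : Q₀ ⟶ Q₁),
    E α q ∧ Q₀ ∈ P ∧ Q₁ ∈ P ∧ IsPreenvelope P α

/-- Condition (▼): `P` is strongly contravariantly finite and every `X` admits a conflation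
`0 → P₁ → P₀ → X → 0` with `P₀, P₁ ∈ P` whose deflation is a `P`-precover. -/
def CondCov (E : ConfClass C) (P : Set C) : Prop :=
  StronglyContraFinite E P ∧
  ∀ X : C, ∃ (P₀ P₁ : C) (i : P₁ ⟶ P₀) (β : P₀ ⟶ X),
    E i β ∧ P₀ ∈ P ∧ P₁ ∈ P ∧ IsPrecover P β

/-- `P` is a pseudo-cluster tilting subcategory. -/
def PseudoClusterTilting (E : ConfClass C) (P : Set C) : Prop :=
  CondEnv E P ∧ CondCov E P

/-- The conflation `(i, d)` splits. -/
def Splits {X Y Z : C} (i : X ⟶ Y) (d : Y ⟶ Z) : Prop :=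
  (∃ r : Y ⟶ X, i ≫ r = 𝟙 X) ∧ ∃ s : Z ⟶ Y, s ≫ d = 𝟙 Z

/-- `P` is self-orthogonal with respect to the class `cl` of conflations: every
conflation in `cl` with both end terms in `P` splits. -/
def SelfOrthWrt (P : Set C) (cl : ConfClass C) : Prop :=
  ∀ ⦃X Y Z : C⦄ (i : X ⟶ Y) (d : Y ⟶ Z), cl i d → X ∈ P → Z ∈ P → Splits i d

/-- `P` is a cluster tilting subcategory: a pseudo-cluster tilting subcategory which is
self-orthogonal with respect to all conflations. -/
def ClusterTilting (E : ConfClass C) (P : Set C) : Prop :=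
  PseudoClusterTilting E P ∧ SelfOrthWrt P E

/-- The class `𝒮` of conflations. -/
def memS (E : ConfClass C) (P : Set C) ⦃S₁ S₂ S₃ : C⦄ (i : S₁ ⟶ S₂) (d : S₂ ⟶ S₃) : Prop :=
  E i d ∧ ∃ (U M₁ M₂ : C) (u₁ : U ⟶ S₁) (p₁ : S₁ ⟶ M₁) (u₂ : U ⟶ S₂) (p₂ : S₂ ⟶ M₂)
    (m : M₁ ⟶ M₂) (q : M₂ ⟶ S₃),
    E u₁ p₁ ∧ E u₂ p₂ ∧ E m q ∧
    HomCovExact P u₂ p₂ ∧ HomContraExact P m q ∧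
    u₁ ≫ i = u₂ ∧ i ≫ p₂ = p₁ ≫ m ∧ d = p₂ ≫ q

/-- The class `𝒯` of conflations. -/
def memT (E : ConfClass C) (P : Set C) ⦃T₁ T₂ T₃ : C⦄ (i : T₁ ⟶ T₂) (d : T₂ ⟶ T₃) : Prop :=
  E i d ∧ ∃ (V N₂ N₃ : C) (n₁ : T₁ ⟶ N₂) (n₂ : N₂ ⟶ N₃) (j₂ : N₂ ⟶ T₂) (v₂ : T₂ ⟶ V)
    (j₃ : N₃ ⟶ T₃) (v₃ : T₃ ⟶ V),
    E n₁ n₂ ∧ E j₂ v₂ ∧ E j₃ v₃ ∧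
    HomCovExact P n₁ n₂ ∧ HomContraExact P j₂ v₂ ∧
    i = n₁ ≫ j₂ ∧ n₂ ≫ j₃ = j₂ ≫ d ∧ d ≫ v₃ = v₂

end Exact

section AbelianDefs

/-- A preadditive category is abelian (in the sense of Definition 2.1 of the paper) if it
has kernels and cokernels and the canonical morphism from the coimage to the image of any
morphism is an isomorphism. -/
def IsAbelianCat (D : Type*) [Category D] [Preadditive D] : Prop :=
  ∃ (hk : HasKernels D) (hc : HasCokernels D),
    ∀ {X Y : D} (f : X ⟶ Y),
      IsIso (letI := hk; letI := hc; CategoryTheory.Abelian.coimageImageComparison f)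

/-- A preadditive category is semi-abelian if it has kernels and cokernels and the
canonical morphism from the coimage to the image of any morphism is both an epimorphism
and a monomorphism. -/
def IsSemiAbelianCat (D : Type*) [Category D] [Preadditive D] : Prop :=
  ∃ (hk : HasKernels D) (hc : HasCokernels D),
    ∀ {X Y : D} (f : X ⟶ Y),
      Mono (letI := hk; letI := hc; CategoryTheory.Abelian.coimageImageComparison f) ∧
      Epi (letI := hk; letI := hc; CategoryTheory.Abelian.coimageImageComparison f)

end AbelianDefs

section ConflationCategory

variable {M : Type u} [Category.{v} M] [Preadditive M]

/-- Objects of the category `E(M)` of conflations: conflations `0 → X₁ → X₂ → X₃ → 0`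
of the exact category `(M, E)`. -/
structure ConfObj (E : ExactStructure M) : Type max u v where
  X₁ : M
  X₂ : M
  X₃ : M
  i : X₁ ⟶ X₂
  d : X₂ ⟶ X₃
  conf : E.conf i d

variable {E : ExactStructure M}

/-- The additive group of morphisms of conflations: triples of morphisms making the two
squares commute. -/
def confHomGroup (A B : ConfObj E) :
    AddSubgroup ((A.X₁ ⟶ B.X₁) × (A.X₂ ⟶ B.X₂) × (A.X₃ ⟶ B.X₃)) where
  carrier := {t | A.i ≫ t.2.1 = t.1 ≫ B.i ∧ A.d ≫ t.2.2 = t.2.1 ≫ B.d}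
  zero_mem' := by simp
  add_mem' := by
    rintro a b ⟨ha₁, ha₂⟩ ⟨hb₁, hb₂⟩
    refine ⟨?_, ?_⟩ <;>
      simp [Preadditive.comp_add, Preadditive.add_comp, ha₁, ha₂, hb₁, hb₂]
  neg_mem' := by
    rintro a ⟨h₁, h₂⟩
    refine ⟨?_, ?_⟩ <;> simp [h₁, h₂]

instance confCategoryStruct : CategoryStruct.{v} (ConfObj E) where
  Hom A B := ↥(confHomGroup A B)
  id A := ⟨(𝟙 _, 𝟙 _, 𝟙 _), by constructor <;> simp⟩
  comp {A B D} f g := ⟨(f.1.1 ≫ g.1.1, f.1.2.1 ≫ g.1.2.1, f.1.2.2 ≫ g.1.2.2), by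
    obtain ⟨hf₁, hf₂⟩ := f.2
    obtain ⟨hg₁, hg₂⟩ := g.2
    constructor
    · rw [← Category.assoc, hf₁, Category.assoc, hg₁, ← Category.assoc]
    · rw [← Category.assoc, hf₂, Category.assoc, hg₂, ← Category.assoc]⟩

/-- Degree `-1` component of a morphism of conflations. -/
def homC₁ {A B : ConfObj E} (f : A ⟶ B) : A.X₁ ⟶ B.X₁ := f.1.1

/-- Degree `0` component of a morphism of conflations. -/
def homC₂ {A B : ConfObj E} (f : A ⟶ B) : A.X₂ ⟶ B.X₂ := f.1.2.1

/-- Degree `1` component of a morphism of conflations. -/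
def homC₃ {A B : ConfObj E} (f : A ⟶ B) : A.X₃ ⟶ B.X₃ := f.1.2.2

lemma confHom_ext {A B : ConfObj E} {f g : A ⟶ B} (h₁ : homC₁ f = homC₁ g)
    (h₂ : homC₂ f = homC₂ g) (h₃ : homC₃ f = homC₃ g) : f = g := by
  apply Subtype.ext
  show (homC₁ f, homC₂ f, homC₃ f) = (homC₁ g, homC₂ g, homC₃ g)
  rw [h₁, h₂, h₃]

@[simp] lemma homC₁_id (A : ConfObj E) : homC₁ (𝟙 A) = 𝟙 A.X₁ := rfl
@[simp] lemma homC₂_id (A : ConfObj E) : homC₂ (𝟙 A) = 𝟙 A.X₂ := rfl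
@[simp] lemma homC₃_id (A : ConfObj E) : homC₃ (𝟙 A) = 𝟙 A.X₃ := rfl
@[simp] lemma homC₁_comp {A B D : ConfObj E} (f : A ⟶ B) (g : B ⟶ D) :
    homC₁ (f ≫ g) = homC₁ f ≫ homC₁ g := rfl
@[simp] lemma homC₂_comp {A B D : ConfObj E} (f : A ⟶ B) (g : B ⟶ D) :
    homC₂ (f ≫ g) = homC₂ f ≫ homC₂ g := rfl
@[simp] lemma homC₃_comp {A B D : ConfObj E} (f : A ⟶ B) (g : B ⟶ D) :
    homC₃ (f ≫ g) = homC₃ f ≫ homC₃ g := rfl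

instance confCategory : Category.{v} (ConfObj E) where
  id_comp f := confHom_ext (by simp) (by simp) (by simp)
  comp_id f := confHom_ext (by simp) (by simp) (by simp)
  assoc f g h := confHom_ext (by simp) (by simp) (by simp)

instance confHomAddCommGroup (A B : ConfObj E) : AddCommGroup (A ⟶ B) :=
  inferInstanceAs (AddCommGroup ↥(confHomGroup A B))

@[simp] lemma homC₁_add {A B : ConfObj E} (f g : A ⟶ B) :
    homC₁ (f + g) = homC₁ f + homC₁ g := rfl
@[simp] lemma homC₂_add {A B : ConfObj E} (f g : A ⟶ B) :
    homC₂ (f + g) = homC₂ f + homC₂ g := rfl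
@[simp] lemma homC₃_add {A B : ConfObj E} (f g : A ⟶ B) :
    homC₃ (f + g) = homC₃ f + homC₃ g := rfl

instance confPreadditive : Preadditive (ConfObj E) where
  homGroup A B := inferInstance
  add_comp A B D f f' g :=
    confHom_ext (by simp [Preadditive.add_comp]) (by simp [Preadditive.add_comp])
      (by simp [Preadditive.add_comp])
  comp_add A B D f g g' :=
    confHom_ext (by simp [Preadditive.comp_add]) (by simp [Preadditive.comp_add])
      (by simp [Preadditive.comp_add])

/-- The degree-wise class of conflations on `E(M)`: a short sequence of conflations is a
conflation if it is a conflation of `M` in each degree. -/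
def degConf (E : ExactStructure M) : ConfClass (ConfObj E) := fun _ _ _ f g =>
  E.conf (homC₁ f) (homC₁ g) ∧ E.conf (homC₂ f) (homC₂ g) ∧ E.conf (homC₃ f) (homC₃ g)

/-- The class `E₀`: degree-wise conflations splitting in degree `0`. -/
def degConf₀ (E : ExactStructure M) : ConfClass (ConfObj E) := fun _ _ _ f g =>
  degConf E f g ∧ Splits (homC₂ f) (homC₂ g)

/-- The class `E₀⁻¹`: degree-wise conflations splitting in degrees `-1` and `0`. -/
def degConf₀neg (E : ExactStructure M) : ConfClass (ConfObj E) := fun _ _ _ f g =>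
  degConf E f g ∧ Splits (homC₁ f) (homC₁ g) ∧ Splits (homC₂ f) (homC₂ g)

/-- The class `E₀¹`: degree-wise conflations splitting in degrees `0` and `1`. -/
def degConf₀pos (E : ExactStructure M) : ConfClass (ConfObj E) := fun _ _ _ f g =>
  degConf E f g ∧ Splits (homC₂ f) (homC₂ g) ∧ Splits (homC₃ f) (homC₃ g)

/-- The full subcategory `S(M)` of `E(M)` consisting of the split conflations. -/
def splitObjs (E : ExactStructure M) : Set (ConfObj E) :=
  {A | Splits A.i A.d}

end ConflationCategory

/-!
Write `I` for the ideal of morphisms factoring through `𝒫`. Since `Hom(-,𝒫)` is exact on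
`0 → X → Y → Z → 0`, every element of `I(X, T)` extends along `f` to an element of `I(Y, T)`; this
gives the existence of the induced map on `Z` in `M/𝒫`. Uniqueness amounts to: `g ≫ v ∈ I` forces
`v ∈ I`. Take the conflation `0 → X →α Q₀ →q Q₁ → 0` of (▲) and extend `α` along `f` to
`u : Y ⟶ Q₀`. Every `φ ∈ I(Y, T)` has the form `u ≫ d + g ≫ v'` with `v' ∈ I`; for `φ = g ≫ v`,
composing with `f` gives `α ≫ d = 0`, so `d` factors through `q`, and `u ≫ q` factors through `g`.
Cancelling the epimorphism `g` then exhibits `v` as an element of `I`.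
-/

section QuotientMorphisms

variable {C : Type u} [Category.{v} C] [Preadditive C] {P : Set C}

lemma comp_mem_factorIdeal {X Q Y : C} (hQ : Q ∈ P) (a : X ⟶ Q) (b : Q ⟶ Y) :
    a ≫ b ∈ factorIdeal P X Y :=
  AddSubgroup.subset_closure ⟨Q, hQ, a, b, rfl⟩

variable (P)

lemma qmap_comp {X Y Z : C} (f : X ⟶ Y) (g : Y ⟶ Z) :
    qmap P (f ≫ g) = qmap P f ≫ qmap P g :=
  rfl

lemma qmap_eq_qmap_iff {X Y : C} (f f' : X ⟶ Y) :
    qmap P f = qmap P f' ↔ f - f' ∈ factorIdeal P X Y :=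
  QuotientAddGroup.eq_iff_sub_mem

lemma qmap_eq_zero_iff {X Y : C} (f : X ⟶ Y) : qmap P f = 0 ↔ f ∈ factorIdeal P X Y :=
  QuotientAddGroup.eq_zero_iff f

lemma qmap_surjective {X Y : C} (φ : (QuotObj.mk X : QuotObj P) ⟶ QuotObj.mk Y) :
    ∃ f : X ⟶ Y, qmap P f = φ :=
  QuotientAddGroup.mk_surjective φ

end QuotientMorphisms

section FactorIdeal

variable {C : Type u} [Category.{v} C] [Preadditive C] {P : Set C}

lemma IsCokernelOf.cancel_left {X Y Q T : C} {c : Y ⟶ Q} {f : X ⟶ Y} (hc : IsCokernelOf c f)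
    {t t' : Q ⟶ T} (h : c ≫ t = c ≫ t') : t = t' := by
  obtain ⟨s, -, hs⟩ := hc.2 (c ≫ t) (by rw [← Category.assoc, hc.1, zero_comp])
  exact (hs t rfl).trans (hs t' h.symm).symm

lemma exists_comp_eq_of_mem_factorIdeal {X Y T : C} {f : X ⟶ Y}
    (hext : ∀ Q ∈ P, ∀ a : X ⟶ Q, ∃ u : Y ⟶ Q, f ≫ u = a) {φ : X ⟶ T}
    (hφ : φ ∈ factorIdeal P X T) : ∃ ψ ∈ factorIdeal P Y T, f ≫ ψ = φ := by
  induction hφ using AddSubgroup.closure_induction with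
  | mem _ hmem =>
    obtain ⟨Q, hQ, a, b, rfl⟩ := hmem
    obtain ⟨u, rfl⟩ := hext Q hQ a
    exact ⟨u ≫ b, comp_mem_factorIdeal hQ u b, (Category.assoc _ _ _).symm⟩
  | zero => exact ⟨0, zero_mem _, comp_zero⟩
  | add _ _ _ _ h₁ h₂ =>
    obtain ⟨ψ₁, hψ₁, rfl⟩ := h₁
    obtain ⟨ψ₂, hψ₂, rfl⟩ := h₂
    exact ⟨ψ₁ + ψ₂, add_mem hψ₁ hψ₂, Preadditive.comp_add _ _ _ _ _ _⟩
  | neg _ _ h =>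
    obtain ⟨ψ, hψ, rfl⟩ := h
    exact ⟨-ψ, neg_mem hψ, Preadditive.comp_neg _ _⟩

lemma exists_eq_comp_add_comp_of_mem_factorIdeal {X Y Z Q₀ T : C} {f : X ⟶ Y} {g : Y ⟶ Z}
    (hexact : HomContraExact P f g) {α : X ⟶ Q₀} (hα : IsPreenvelope P α) {u : Y ⟶ Q₀}
    (hu : f ≫ u = α) {φ : Y ⟶ T} (hφ : φ ∈ factorIdeal P Y T) :
    ∃ (d : Q₀ ⟶ T), ∃ v ∈ factorIdeal P Z T, φ = u ≫ d + g ≫ v := by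
  induction hφ using AddSubgroup.closure_induction with
  | mem _ hmem =>
    obtain ⟨Q, hQ, a, b, rfl⟩ := hmem
    obtain ⟨c, hc⟩ := hα.2 Q hQ (f ≫ a)
    have hker : f ≫ (a - u ≫ c) = 0 := by
      rw [Preadditive.comp_sub, ← Category.assoc, hu, hc, sub_self]
    obtain ⟨w, hw⟩ := (hexact Q hQ).2.1 _ hker
    refine ⟨c ≫ b, w ≫ b, comp_mem_factorIdeal hQ w b, ?_⟩
    rw [← Category.assoc g, hw, Preadditive.sub_comp, Category.assoc]
    abel
  | zero => exact ⟨0, 0, zero_mem _, by simp⟩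
  | add _ _ _ _ h₁ h₂ =>
    obtain ⟨d₁, v₁, hv₁, rfl⟩ := h₁
    obtain ⟨d₂, v₂, hv₂, rfl⟩ := h₂
    refine ⟨d₁ + d₂, v₁ + v₂, add_mem hv₁ hv₂, ?_⟩
    simp only [Preadditive.comp_add]
    abel
  | neg _ _ h =>
    obtain ⟨d, v, hv, rfl⟩ := h
    refine ⟨-d, -v, neg_mem hv, ?_⟩
    simp only [Preadditive.comp_neg, neg_add]

lemma mem_factorIdeal_of_comp_mem {X Y Z Q₀ Q₁ T : C} {f : X ⟶ Y} {g : Y ⟶ Z}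
    (hg : IsCokernelOf g f) (hexact : HomContraExact P f g) {α : X ⟶ Q₀} {q : Q₀ ⟶ Q₁}
    (hq : IsCokernelOf q α) (hQ₁ : Q₁ ∈ P) (hα : IsPreenvelope P α) {v : Z ⟶ T}
    (hv : g ≫ v ∈ factorIdeal P Y T) : v ∈ factorIdeal P Z T := by
  obtain ⟨u, hu⟩ := (hexact Q₀ hα.1).2.2 α
  obtain ⟨d, v', hv', hdecomp⟩ := exists_eq_comp_add_comp_of_mem_factorIdeal hexact hα hu hv
  have hαd : α ≫ d = 0 := by
    have := congrArg (f ≫ ·) hdecomp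
    simp only [Preadditive.comp_add, ← Category.assoc, hu, hg.1, zero_comp, add_zero] at this
    exact this.symm
  obtain ⟨e, rfl, -⟩ := hq.2 d hαd
  obtain ⟨w, hw⟩ := (hexact Q₁ hQ₁).2.1 (u ≫ q) (by rw [← Category.assoc, hu, hq.1])
  have hv_eq : v = w ≫ e + v' := by
    refine hg.cancel_left ?_
    rw [hdecomp, Preadditive.comp_add, ← Category.assoc, ← Category.assoc, hw, Category.assoc]
  rw [hv_eq]
  exact add_mem (comp_mem_factorIdeal hQ₁ w e) hv'

lemma isCokernelOf_qmap {X Y Z : C} {f : X ⟶ Y} {g : Y ⟶ Z} (hg : IsCokernelOf g f)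
    (hext : ∀ Q ∈ P, ∀ a : X ⟶ Q, ∃ u : Y ⟶ Q, f ≫ u = a)
    (hcancel : ∀ {T : C} (v : Z ⟶ T), g ≫ v ∈ factorIdeal P Y T → v ∈ factorIdeal P Z T) :
    IsCokernelOf (qmap P g) (qmap P f) := by
  refine ⟨by rw [← qmap_comp, hg.1]; rfl, ?_⟩
  rintro ⟨T⟩ φ' hφ'
  obtain ⟨φ, rfl⟩ := qmap_surjective P φ'
  rw [← qmap_comp, qmap_eq_zero_iff] at hφ'
  obtain ⟨ψ, hψ, hfψ⟩ := exists_comp_eq_of_mem_factorIdeal hext hφ'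
  obtain ⟨v, hv, -⟩ := hg.2 (φ - ψ) (by rw [Preadditive.comp_sub, hfψ, sub_self])
  have hgv : qmap P g ≫ qmap P v = qmap P φ := by
    rw [← qmap_comp, hv, qmap_eq_qmap_iff, sub_sub_cancel_left]
    exact neg_mem hψ
  refine ⟨qmap P v, hgv, fun t' ht' => ?_⟩
  obtain ⟨t, rfl⟩ := qmap_surjective P t'
  rw [← hgv, ← qmap_comp, ← qmap_comp, qmap_eq_qmap_iff, ← Preadditive.comp_sub] at ht'
  exact (qmap_eq_qmap_iff P t v).2 (hcancel _ ht')

end FactorIdeal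

theorem quotient_cokernel_of_homContraExact_general {M : Type u} [Category.{v} M] [Preadditive M]
    (E : ExactStructure M) (P : Set M)
    (h : CondEnv E.conf P) {X Y Z : M} (f : X ⟶ Y) (g : Y ⟶ Z)
    (hconf : E.conf f g) (hexact : HomContraExact P f g) :
    IsCokernelOf (qmap P g) (qmap P f) := by
  have hg := E.coker_of_conf hconf
  obtain ⟨Q₀, Q₁, α, q, hαq, -, hQ₁, hα⟩ := h.2 X
  exact isCokernelOf_qmap hg (fun Q hQ => (hexact Q hQ).2.2)
    fun v hv => mem_factorIdeal_of_comp_mem hg hexact (E.coker_of_conf hαq) hQ₁ hα hv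

/-- if `𝒫` satisfies condition (▲), then for every `Hom(-,𝒫)`-exact
conflation `0 → X → Y → Z → 0`, `ḡ` is the cokernel of `f̄` in `M/𝒫`. -/
theorem quotient_cokernel_of_homContraExact {M : Type u} [Category.{v} M] [Preadditive M]
    [HasBinaryBiproducts M] (E : ExactStructure M) (P : Set M) (hP : IsAddSubcat P)
    (h : CondEnv E.conf P) {X Y Z : M} (f : X ⟶ Y) (g : Y ⟶ Z)
    (hconf : E.conf f g) (hexact : HomContraExact P f g) :
    IsCokernelOf (qmap P g) (qmap P f) :=
  quotient_cokernel_of_homContraExact_general E P h f g hconf hexact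

end PaperQEC
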